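/- arXiv:2112.08716 — 3 statements merged into one kernel-verified Lean document; each statement's English description precedes it below -/
import Mathlib

section
/- Let L₁,…,L_n be commuting formal variables (elements of a commutative ring with the relevant elements invertible), and define S_n = Σ over nonempty subsets {j₁ > j₂ > ⋯ > j_l} of {1,…,n} with consecutive gaps j_m − j_{m+1} ≥ 2 of (−1)^{l+1} L_{j₁}⋯L_{j_l}. Then (1−L₁)(1−L₂)(1 − S'_{n}) = 1 − S_n, where S'_n is the corresponding sum for the modified loops L'₂ = L₁L₂/((1−L₁)(1−L₂)), L'₃ = L₃/(1−L₂), and L'_k = L_k for 4 ≤ k ≤ n (with S'_n summing over nonadjacent subsets of {2,…,n}). -/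
/-!
Adding the empty set, `1 - loopSum L lo n` becomes the signed sum `P lo` of `∏_{j ∈ S} L j` over
all nonadjacent `S ⊆ {lo,…,n}`. Splitting on whether `lo ∈ S` gives the three-term recursion
`P lo = P (lo + 1) - L lo * P (lo + 2)`. Unfolding it down to `P 4` and `P 5` on both sides
(the modified loops agree with the old ones from index 4 on) reduces the theorem to a polynomial
identity in `L 1, L 2, L 3, u, v, P 4, P 5` modulo the relations `(1 - L 1) u = 1` and
`(1 - L 2) v = 1`.
-/

open Finset in
/-- The inclusion–exclusion loop sum `S = Σ (−1)^{l+1} L_{j₁}⋯L_{j_l}` over nonempty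
subsets `{j₁ > ⋯ > j_l}` of `{lo,…,n}` with no two consecutive indices. -/
def loopSum {R : Type*} [CommRing R] (L : ℕ → R) (lo n : ℕ) : R :=
  ∑ S ∈ ((Finset.Icc lo n).powerset).filter
      (fun S => S.Nonempty ∧ ∀ j ∈ S, j + 1 ∉ S),
    (-1 : R) ^ (S.card + 1) * ∏ j ∈ S, L j

open Finset

def nonadjacentSets (lo n : ℕ) : Finset (Finset ℕ) :=
  (Icc lo n).powerset.filter fun S => ∀ j ∈ S, j + 1 ∉ S

def nonadjacentSum {R : Type*} [CommRing R] (L : ℕ → R) (lo n : ℕ) : R :=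
  ∑ S ∈ nonadjacentSets lo n, (-1 : R) ^ #S * ∏ j ∈ S, L j

section NonadjacentSets

variable {lo n : ℕ} {S : Finset ℕ}

lemma mem_nonadjacentSets :
    S ∈ nonadjacentSets lo n ↔ (∀ j ∈ S, lo ≤ j ∧ j ≤ n) ∧ ∀ j ∈ S, j + 1 ∉ S := by
  simp only [nonadjacentSets, mem_filter, mem_powerset, subset_iff, mem_Icc]

lemma empty_mem_nonadjacentSets : ∅ ∈ nonadjacentSets lo n := by
  simp [mem_nonadjacentSets]

lemma filter_notMem_nonadjacentSets :
    (nonadjacentSets lo n).filter (lo ∉ ·) = nonadjacentSets (lo + 1) n := by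
  ext S
  simp only [mem_filter, mem_nonadjacentSets]
  constructor
  · rintro ⟨⟨hrange, hadj⟩, hlo⟩
    refine ⟨fun j hj => ?_, hadj⟩
    have : j ≠ lo := by rintro rfl; exact hlo hj
    have := hrange j hj
    omega
  · rintro ⟨hrange, hadj⟩
    refine ⟨⟨fun j hj => ?_, hadj⟩, fun hlo => ?_⟩
    · have := hrange j hj; omega
    · have := hrange lo hlo; omega

lemma filter_mem_nonadjacentSets (h : lo ≤ n) :
    (nonadjacentSets lo n).filter (lo ∈ ·) = (nonadjacentSets (lo + 2) n).image (insert lo) := by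
  ext S
  simp only [mem_filter, mem_image, mem_nonadjacentSets]
  constructor
  · rintro ⟨⟨hrange, hadj⟩, hlo⟩
    refine ⟨S.erase lo, ⟨fun j hj => ?_, fun j hj hj' => ?_⟩, insert_erase hlo⟩
    · obtain ⟨hne, hjS⟩ := mem_erase.mp hj
      have : j ≠ lo + 1 := by rintro rfl; exact hadj lo hlo hjS
      have := hrange j hjS
      omega
    · exact hadj j (mem_of_mem_erase hj) (mem_of_mem_erase hj')
  · rintro ⟨T, ⟨hrange, hadj⟩, rfl⟩
    refine ⟨⟨fun j hj => ?_, fun j hj hj' => ?_⟩, mem_insert_self lo T⟩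
    · rcases mem_insert.mp hj with rfl | hj
      · omega
      · have := hrange j hj; omega
    · rcases mem_insert.mp hj with rfl | hj <;> rcases mem_insert.mp hj' with hj' | hj'
      · omega
      · have := hrange _ hj'; omega
      · have := hrange j hj; omega
      · exact hadj j hj hj'

lemma notMem_of_mem_nonadjacentSets (hS : S ∈ nonadjacentSets lo n) {j : ℕ} (hj : j < lo) :
    j ∉ S :=
  fun hjS => by have := (mem_nonadjacentSets.mp hS).1 j hjS; omega

lemma insert_injOn_nonadjacentSets :
    Set.InjOn (insert lo) (nonadjacentSets (lo + 2) n : Set (Finset ℕ)) :=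
  fun T hT T' hT' hTT' => by
    rw [← erase_insert (notMem_of_mem_nonadjacentSets (mem_coe.mp hT) (by omega : lo < lo + 2)),
      ← erase_insert (notMem_of_mem_nonadjacentSets (mem_coe.mp hT') (by omega : lo < lo + 2)),
      hTT']

end NonadjacentSets

section NonadjacentSum

variable {R : Type*} [CommRing R] (L : ℕ → R) (lo n : ℕ)

lemma one_sub_loopSum : 1 - loopSum L lo n = nonadjacentSum L lo n := by
  have hempty : (nonadjacentSets lo n).filter (¬ ·.Nonempty) = {∅} := by
    ext S
    simp only [mem_filter, mem_singleton, not_nonempty_iff_eq_empty]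
    exact ⟨And.right, by rintro rfl; exact ⟨empty_mem_nonadjacentSets, rfl⟩⟩
  have hnonempty : (nonadjacentSets lo n).filter Finset.Nonempty
      = (Icc lo n).powerset.filter fun S => S.Nonempty ∧ ∀ j ∈ S, j + 1 ∉ S := by
    rw [nonadjacentSets, filter_filter]
    exact filter_congr fun S _ => and_comm
  rw [nonadjacentSum, ← sum_filter_add_sum_filter_not _ Finset.Nonempty, hempty, hnonempty,
    sum_singleton, loopSum]
  simp only [card_empty, pow_zero, prod_empty, mul_one, pow_succ, mul_neg_one, neg_mul,
    sum_neg_distrib]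
  ring

lemma nonadjacentSum_of_le (h : lo ≤ n) :
    nonadjacentSum L lo n = nonadjacentSum L (lo + 1) n - L lo * nonadjacentSum L (lo + 2) n := by
  have hinsert : ∀ T ∈ nonadjacentSets (lo + 2) n,
      (-1 : R) ^ #(insert lo T) * ∏ j ∈ insert lo T, L j
        = -(L lo * ((-1) ^ #T * ∏ j ∈ T, L j)) := by
    intro T hT
    have hlo : lo ∉ T := notMem_of_mem_nonadjacentSets hT (by omega)
    rw [card_insert_of_notMem hlo, prod_insert hlo]
    ring
  rw [nonadjacentSum, ← sum_filter_add_sum_filter_not _ (lo ∈ ·), filter_mem_nonadjacentSets h,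
    filter_notMem_nonadjacentSets, sum_image insert_injOn_nonadjacentSets,
    sum_congr rfl hinsert, sum_neg_distrib, ← mul_sum, nonadjacentSum, nonadjacentSum]
  ring

lemma nonadjacentSum_congr {L' : ℕ → R} (h : ∀ j, lo ≤ j → L j = L' j) :
    nonadjacentSum L lo n = nonadjacentSum L' lo n :=
  sum_congr rfl fun S hS => by
    rw [prod_congr rfl fun j hj => h j ((mem_nonadjacentSets.mp hS).1 j hj).1]

end NonadjacentSum

theorem loop_inductive_step {R : Type*} [CommRing R] (n : ℕ) (hn : 3 ≤ n)
    (L : ℕ → R) (u v : R) (hu : (1 - L 1) * u = 1) (hv : (1 - L 2) * v = 1) :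
    (1 - L 1) * (1 - L 2) *
        (1 - loopSum (fun k => if k = 2 then L 1 * L 2 * (u * v)
            else if k = 3 then L 3 * v else L k) 2 n)
      = 1 - loopSum L 1 n := by
  set L' : ℕ → R := fun k => if k = 2 then L 1 * L 2 * (u * v)
      else if k = 3 then L 3 * v else L k
  have hagree (lo : ℕ) (hlo : 4 ≤ lo) : nonadjacentSum L' lo n = nonadjacentSum L lo n :=
    nonadjacentSum_congr _ _ _ fun j hj => by
      simp only [L']
      rw [if_neg (by omega), if_neg (by omega)]
  rw [one_sub_loopSum, one_sub_loopSum,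
    nonadjacentSum_of_le L' 2 n (by omega), nonadjacentSum_of_le L' 3 n (by omega),
    nonadjacentSum_of_le L 1 n (by omega), nonadjacentSum_of_le L 2 n (by omega),
    nonadjacentSum_of_le L 3 n (by omega), hagree 4 le_rfl, hagree 5 (by omega)]
  simp only [L', reduceIte, Nat.reduceEqDiff]
  linear_combination (-(L 1 * L 2 * nonadjacentSum L 4 n * (1 - L 2) * v)) * hu
    - ((1 - L 1) * L 3 * nonadjacentSum L 5 n + L 1 * L 2 * nonadjacentSum L 4 n) * hv
end

section
/- For real t > 0 and real x, the series Σ_{k=0}^∞ (3^k/2^{2k+3}) Σ_{ℓ=0}^k C(k,ℓ)(−1)^ℓ (1/12^ℓ) (2/(e^{t/5}+1))^{2k+2ℓ+3} e^{(k+ℓ+x)t/5} converges and equals (e^{2t/5} − 1)/(e^t − 1) · e^{tx/5}. -/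
/-!
With `u = e^{t/5}`, the `k`-th term is a binomial sum in `ℓ` that collapses to
`e^{tx/5} (u+1)^{-3} ((3u/(u+1)²) (1 - u/(3(u+1)²)))^k`, so the series is geometric with ratio
`u(3u² + 5u + 3)/(u+1)⁴`. Its sum is `e^{tx/5} (u+1)/(u⁴+u³+u²+u+1) = e^{tx/5} (u²-1)/(u⁵-1)`,
because `(u+1)⁴ - u(3u² + 5u + 3) = u⁴+u³+u²+u+1`.
-/

open Finset Real

lemma sum_range_choose_mul_pow {R : Type*} [CommSemiring R] (b : R) (k : ℕ) :
    ∑ ℓ ∈ range (k + 1), (k.choose ℓ : R) * b ^ ℓ = (b + 1) ^ k := by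
  simp only [add_pow, one_pow, mul_one, mul_comm]

noncomputable def besselRatio (u : ℝ) : ℝ := u * (3 * u ^ 2 + 5 * u + 3) / (u + 1) ^ 4

lemma one_sub_besselRatio {u : ℝ} (hu : u + 1 ≠ 0) :
    1 - besselRatio u = (u ^ 4 + u ^ 3 + u ^ 2 + u + 1) / (u + 1) ^ 4 := by
  rw [besselRatio]
  field_simp
  ring

lemma besselRatio_nonneg {u : ℝ} (hu : 0 ≤ u) : 0 ≤ besselRatio u := by
  unfold besselRatio
  positivity

lemma besselRatio_lt_one {u : ℝ} (hu : 0 ≤ u) : besselRatio u < 1 := by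
  have h : 0 < 1 - besselRatio u := by
    rw [one_sub_besselRatio (by positivity)]
    positivity
  linarith

lemma bessel_summand_eq (v u E : ℝ) (k ℓ : ℕ) :
    (3 : ℝ) ^ k / 2 ^ (2 * k + 3) *
        ((k.choose ℓ : ℝ) * (-1 : ℝ) ^ ℓ * (1 / 12 ^ ℓ) * v ^ (2 * k + 2 * ℓ + 3) *
          (u ^ k * u ^ ℓ * E)) =
      v ^ 3 / 8 * E * (3 / 4 * v ^ 2 * u) ^ k *
        ((k.choose ℓ : ℝ) * (-(v ^ 2 * u / 12)) ^ ℓ) := by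
  rw [show (2 : ℝ) ^ (2 * k + 3) = 4 ^ k * 8 by rw [pow_add, pow_mul]; norm_num,
    neg_pow (v ^ 2 * u / 12)]
  simp only [mul_pow, div_pow]
  ring

lemma bessel_term_eq {u : ℝ} (hu : u + 1 ≠ 0) (E : ℝ) (k : ℕ) :
    (3 : ℝ) ^ k / 2 ^ (2 * k + 3) *
        ∑ ℓ ∈ range (k + 1), (k.choose ℓ : ℝ) * (-1 : ℝ) ^ ℓ * (1 / 12 ^ ℓ) *
          (2 / (u + 1)) ^ (2 * k + 2 * ℓ + 3) * (u ^ k * u ^ ℓ * E) =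
      E / (u + 1) ^ 3 * besselRatio u ^ k := by
  have hprefactor : (2 / (u + 1)) ^ 3 / 8 * E = E / (u + 1) ^ 3 := by
    field_simp
    ring
  have hratio : 3 / 4 * (2 / (u + 1)) ^ 2 * u * (-((2 / (u + 1)) ^ 2 * u / 12) + 1) =
      besselRatio u := by
    rw [besselRatio]
    field_simp
    ring
  simp_rw [mul_sum, bessel_summand_eq, ← mul_sum, sum_range_choose_mul_pow]
  rw [mul_assoc, ← mul_pow, hratio, hprefactor]

lemma hasSum_mul_besselRatio_pow {u : ℝ} (hu₀ : 0 ≤ u) (hu₁ : u ≠ 1) (E : ℝ) :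
    HasSum (fun k : ℕ => E / (u + 1) ^ 3 * besselRatio u ^ k)
      ((u ^ 2 - 1) / (u ^ 5 - 1) * E) := by
  have hq : u ^ 4 + u ^ 3 + u ^ 2 + u + 1 ≠ 0 := by positivity
  have h5 : u ^ 5 - 1 ≠ 0 := by
    rw [show u ^ 5 - 1 = (u - 1) * (u ^ 4 + u ^ 3 + u ^ 2 + u + 1) by ring]
    exact mul_ne_zero (sub_ne_zero.2 hu₁) hq
  have hsum : E / (u + 1) ^ 3 * (1 - besselRatio u)⁻¹ = (u ^ 2 - 1) / (u ^ 5 - 1) * E := by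
    rw [one_sub_besselRatio (by positivity)]
    field_simp
    ring
  rw [← hsum]
  exact (hasSum_geometric_of_lt_one (besselRatio_nonneg hu₀)
    (besselRatio_lt_one hu₀)).mul_left (E / (u + 1) ^ 3)

theorem bessel_gen_fun_series (t x : ℝ) (ht : 0 < t) :
    Summable (fun k : ℕ => (3 : ℝ) ^ k / 2 ^ (2 * k + 3) *
        ∑ ℓ ∈ Finset.range (k + 1),
          (k.choose ℓ : ℝ) * (-1 : ℝ) ^ ℓ * (1 / 12 ^ ℓ) *
            (2 / (Real.exp (t / 5) + 1)) ^ (2 * k + 2 * ℓ + 3) *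
            Real.exp ((k + ℓ + x) * t / 5)) ∧
    ∑' k : ℕ, (3 : ℝ) ^ k / 2 ^ (2 * k + 3) *
        ∑ ℓ ∈ Finset.range (k + 1),
          (k.choose ℓ : ℝ) * (-1 : ℝ) ^ ℓ * (1 / 12 ^ ℓ) *
            (2 / (Real.exp (t / 5) + 1)) ^ (2 * k + 2 * ℓ + 3) *
            Real.exp ((k + ℓ + x) * t / 5)
      = (Real.exp (2 * t / 5) - 1) / (Real.exp t - 1) * Real.exp (t * x / 5) := by
  set u := exp (t / 5) with hu
  have hexp : ∀ k ℓ : ℕ, exp ((k + ℓ + x) * t / 5) = u ^ k * u ^ ℓ * exp (t * x / 5) := by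
    intro k ℓ
    rw [hu, ← exp_nat_mul, ← exp_nat_mul, ← exp_add, ← exp_add]
    ring_nf
  have h2 : exp (2 * t / 5) = u ^ 2 := by
    rw [hu, ← exp_nat_mul]
    ring_nf
  have h5 : exp t = u ^ 5 := by
    rw [hu, ← exp_nat_mul]
    ring_nf
  have hu₁ : u ≠ 1 := (one_lt_exp_iff.2 (by positivity)).ne'
  have hsum := hasSum_mul_besselRatio_pow (exp_pos _).le hu₁ (exp (t * x / 5))
  simp_rw [hexp, bessel_term_eq (u := u) (by positivity), h2, h5]
  exact ⟨hsum.summable, hsum.tsum_eq⟩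
end

section
/- For every integer n ≥ 0 and real x: B_{n+1}((x+2)/5) − B_{n+1}(x/5) = ((n+1)/5^n) Σ_{k=0}^∞ (3^k/2^{2k+3}) Σ_{ℓ=0}^k C(k,ℓ) (−1)^ℓ (1/12^ℓ) E_n^{(2k+2ℓ+3)}(k+ℓ+x), with the double series converging absolutely. -/
/-- The Euler polynomial of order `p`, `E_n^{(p)}(x)`, defined via the
exponential generating function `(2/(e^t+1))^p e^{xt} = Σ E_n^{(p)}(x) t^n/n!`. -/
noncomputable def eulerHO (p n : ℕ) (x : ℝ) : ℝ :=
  (n.factorial : ℝ) * PowerSeries.coeff n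
    (((2 : PowerSeries ℝ) * (PowerSeries.exp ℝ + 1)⁻¹) ^ p
      * PowerSeries.rescale x (PowerSeries.exp ℝ))

/-- The Bernoulli polynomial `B_n(x)`, with EGF `(t/(e^t-1)) e^{xt}`. -/
noncomputable def bernoulliPoly (n : ℕ) (x : ℝ) : ℝ :=
  Polynomial.aeval x (Polynomial.bernoulli n)

/-!
Write `q = 2/(e^t+1)`. By the binomial theorem the `k`-th term of the series is `n!` times the
`t^n`-coefficient of `q^3 e^{xt}/8 · w^k`, where `w = (3/4) q² e^t (1 - q² e^t/12)`. Since
`(1 - w)(e^t+1)^4 = 1 + e^t + ⋯ + e^{4t}`, the geometric series in `w` sums to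
`e^{xt}(e^{2t}-1)/(e^{5t}-1)`, the generating function of `B_{n+1}((x+2)/5) - B_{n+1}(x/5)`.

The geometric series of `t^n`-coefficients converges because `w(0) = 11/16 < 1`: writing
`w = w(0) + v` with `v(0) = 0`, the `t^n`-coefficient of `f w^k` only involves `v^j` for `j ≤ n`,
hence is `O(k^n w(0)^k)`. For absolute convergence, `q = (1+h)⁻¹` with `h = (e^t-1)/2` is
majorized coefficientwise by `(1-h)⁻¹`, for which the same construction gives `w(0) = 13/16`.
-/

open PowerSeries Finset Filter Topology
open scoped Nat

noncomputable section

theorem summable_choose_mul_pow_sub (j : ℕ) {r : ℝ} (hr0 : 0 ≤ r) (hr : r < 1) :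
    Summable fun k : ℕ => (k.choose j : ℝ) * r ^ (k - j) := by
  rw [← summable_nat_add_iff j]
  simpa using summable_choose_mul_geometric_of_norm_lt_one j (r := r)
    (by rwa [Real.norm_of_nonneg hr0])

namespace PowerSeries

theorem coeff_mul_pow_eq_sum_choose {R : Type*} [CommRing R] (f w : R⟦X⟧) (n k : ℕ) :
    coeff n (f * w ^ k) = ∑ j ∈ range (n + 1), (k.choose j : R) * constantCoeff w ^ (k - j) *
      coeff n (f * (w - C (constantCoeff w)) ^ j) := by
  set a := constantCoeff w
  set v := w - C a
  have hvanish : ∀ j, n < j → coeff n (f * v ^ j) = 0 := fun j hj =>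
    X_pow_dvd_iff.1 ((pow_dvd_pow_of_dvd (X_dvd_iff.2 (by simp [v, a])) j).mul_left f) n hj
  calc coeff n (f * w ^ k)
      = ∑ j ∈ range (k + 1), (k.choose j : R) * a ^ (k - j) * coeff n (f * v ^ j) := by
        rw [show w = v + C a by simp [v], add_pow, mul_sum, map_sum]
        refine sum_congr rfl fun j _ => ?_
        rw [show f * (v ^ j * C a ^ (k - j) * (k.choose j : R⟦X⟧))
            = C ((k.choose j : R) * a ^ (k - j)) * (f * v ^ j) by
          simp only [map_mul, map_pow, map_natCast]; ring, coeff_C_mul]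
    _ = ∑ j ∈ range (n + k + 1), (k.choose j : R) * a ^ (k - j) * coeff n (f * v ^ j) :=
        sum_subset (range_subset_range.2 (by omega)) fun j _ hj => by
          rw [Nat.choose_eq_zero_of_lt (by simpa using hj), Nat.cast_zero, zero_mul, zero_mul]
    _ = ∑ j ∈ range (n + 1), (k.choose j : R) * a ^ (k - j) * coeff n (f * v ^ j) :=
        (sum_subset (range_subset_range.2 (by omega)) fun j _ hj => by
          rw [hvanish j (by simpa using hj), mul_zero]).symm

section Normed

variable {R : Type*} [NormedCommRing R] [NormOneClass R]

theorem summable_norm_coeff_mul_pow (f w : R⟦X⟧) (n : ℕ) (hw : ‖constantCoeff w‖ < 1) :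
    Summable fun k => ‖coeff n (f * w ^ k)‖ := by
  set v := w - C (constantCoeff w)
  refine Summable.of_nonneg_of_le (fun _ => norm_nonneg _) (fun k => ?_)
    (summable_sum (s := range (n + 1)) fun j _ =>
      (summable_choose_mul_pow_sub j (norm_nonneg _) hw).mul_right ‖coeff n (f * v ^ j)‖)
  rw [coeff_mul_pow_eq_sum_choose]
  refine (norm_sum_le _ _).trans (sum_le_sum fun j _ => (norm_mul₃_le ..).trans ?_)
  gcongr
  · simpa using Nat.norm_cast_le (α := R) (k.choose j)
  · exact norm_pow_le _ _

theorem hasSum_coeff_mul_pow {f g w : R⟦X⟧} (hfg : g * (1 - w) = f)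
    (hw : ‖constantCoeff w‖ < 1) (n : ℕ) :
    HasSum (fun k => coeff n (f * w ^ k)) (coeff n g) := by
  rw [hasSum_iff_tendsto_nat_of_summable_norm (summable_norm_coeff_mul_pow f w n hw)]
  have hpartial (K : ℕ) :
      ∑ k ∈ range K, coeff n (f * w ^ k) = coeff n g - coeff n (g * w ^ K) := by
    rw [← map_sum, ← mul_sum, ← hfg, mul_assoc, mul_neg_geom_sum, mul_sub, mul_one, map_sub]
  have htail : Tendsto (fun K => coeff n (g * w ^ K)) atTop (𝓝 0) :=
    tendsto_zero_iff_norm_tendsto_zero.2 (summable_norm_coeff_mul_pow g w n hw).tendsto_atTop_zero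
  simpa [hpartial] using tendsto_const_nhds.sub htail

end Normed

def Majorizes (F f : ℝ⟦X⟧) : Prop := ∀ m, |coeff m f| ≤ coeff m F

namespace Majorizes

variable {F G f g : ℝ⟦X⟧}

theorem coeff_nonneg (h : Majorizes F f) (m : ℕ) : 0 ≤ coeff m F := (abs_nonneg _).trans (h m)

theorem mul (hf : Majorizes F f) (hg : Majorizes G g) : Majorizes (F * G) (f * g) := fun m => by
  rw [coeff_mul, coeff_mul]
  refine (abs_sum_le_sum_abs _ _).trans (sum_le_sum fun ij _ => ?_)
  rw [abs_mul]
  exact mul_le_mul (hf _) (hg _) (abs_nonneg _) (hf.coeff_nonneg _)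

theorem one : Majorizes 1 1 := fun m => by
  rw [coeff_one]; split_ifs <;> simp

theorem pow (hf : Majorizes F f) (p : ℕ) : Majorizes (F ^ p) (f ^ p) := by
  induction p with
  | zero => simpa using one
  | succ p ih => simpa only [pow_succ] using ih.mul hf

end Majorizes

theorem majorizes_rescale_exp {a b : ℝ} (hab : |a| ≤ b) :
    Majorizes (rescale b (exp ℝ)) (rescale a (exp ℝ)) := fun m => by
  have hc : (0 : ℝ) ≤ algebraMap ℚ ℝ (1 / m !) := by rw [eq_ratCast]; positivity
  rw [coeff_rescale, coeff_rescale, coeff_exp, abs_mul, abs_of_nonneg hc, abs_pow]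
  gcongr

-- Induction on the coefficients of `(1 + h)⁻¹ = 1 - (1 + h)⁻¹ h` and `(1 - h)⁻¹ = 1 + (1 - h)⁻¹ h`:
-- as `h(0) = 0`, the `t^m`-coefficient of the products only involves lower coefficients.
theorem majorizes_inv_one_add {h : ℝ⟦X⟧} (hpos : ∀ m, 0 ≤ coeff m h) (h0 : constantCoeff h = 0) :
    Majorizes (1 - h)⁻¹ (1 + h)⁻¹ := by
  set u := (1 + h)⁻¹
  set U := (1 - h)⁻¹
  have hu : u = 1 - u * h := by
    linear_combination PowerSeries.inv_mul_cancel (1 + h) (by simp [h0])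
  have hU : U = 1 + U * h := by
    linear_combination PowerSeries.inv_mul_cancel (1 - h) (by simp [h0])
  intro m
  induction m using Nat.strong_induction_on with
  | _ m ih =>
    have hprod : |coeff m (u * h)| ≤ coeff m (U * h) := by
      rw [coeff_mul, coeff_mul]
      refine (abs_sum_le_sum_abs _ _).trans (sum_le_sum fun ⟨i, j⟩ hij => ?_)
      rw [abs_mul, abs_of_nonneg (hpos j)]
      rcases Nat.eq_zero_or_pos j with rfl | hj
      · simp [coeff_zero_eq_constantCoeff, h0]
      · rw [HasAntidiagonal.mem_antidiagonal] at hij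
        exact mul_le_mul_of_nonneg_right (ih i (by omega)) (hpos j)
    rw [hu, hU, map_sub, map_add]
    exact (abs_sub _ _).trans (add_le_add (Majorizes.one m) hprod)

theorem exp_sub_one_ne_zero (A : Type*) [CommRing A] [Algebra ℚ A] [Nontrivial A] :
    exp A - 1 ≠ 0 := fun h => by
  simpa using congrArg (coeff 1) h

theorem rescale_bernoulli_generating_function {A : Type*} [CommRing A] [Algebra ℚ A]
    (y : A) (N : ℕ) :
    rescale (N : A) (mk fun m => Polynomial.aeval y ((1 / m ! : ℚ) • Polynomial.bernoulli m))
      * (exp A ^ N - 1) = C (N : A) * X * rescale (N * y) (exp A) := by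
  have h := congrArg (rescale (N : A)) (Polynomial.bernoulli_generating_function y)
  rwa [map_mul, map_mul, map_sub, map_one, ← exp_pow_eq_rescale_exp, rescale_X, rescale_rescale,
    mul_comm y] at h

end PowerSeries

namespace BesselThreeLoop

-- The `n`-th polynomial of the Appell sequence with exponential generating function `r^p e^{yt}`.
def egfPoly (r : ℝ⟦X⟧) (p n : ℕ) (y : ℝ) : ℝ := n ! * coeff n (r ^ p * rescale y (exp ℝ))

theorem abs_egfPoly_le {r R : ℝ⟦X⟧} (h : Majorizes R r) (p n : ℕ) {y b : ℝ} (hyb : |y| ≤ b) :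
    |egfPoly r p n y| ≤ egfPoly R p n b := by
  rw [egfPoly, egfPoly, abs_mul, Nat.abs_cast]
  gcongr
  exact (h.pow p).mul (majorizes_rescale_exp hyb) n

def eulerGF : ℝ⟦X⟧ := 2 * (exp ℝ + 1)⁻¹

theorem eulerHO_eq_egfPoly (p n : ℕ) (y : ℝ) : eulerHO p n y = egfPoly eulerGF p n y := rfl

theorem eulerGF_mul : eulerGF * (exp ℝ + 1) = 2 := by
  rw [eulerGF, mul_assoc, PowerSeries.inv_mul_cancel _ (by simp), mul_one]

theorem constantCoeff_eulerGF : constantCoeff eulerGF = 1 := by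
  have := congrArg constantCoeff eulerGF_mul
  simp only [map_mul, map_add, constantCoeff_exp, map_one, map_ofNat] at this
  linarith

def eulerMajorant : ℝ⟦X⟧ := (1 - C (1 / 2) * (exp ℝ - 1))⁻¹

theorem constantCoeff_eulerMajorant : constantCoeff eulerMajorant = 1 := by
  simp [eulerMajorant]

theorem majorizes_eulerGF : Majorizes eulerMajorant eulerGF := by
  have h : eulerGF = (1 + C (1 / 2) * (exp ℝ - 1))⁻¹ := by
    rw [PowerSeries.eq_inv_iff_mul_eq_one (by simp)]
    have hC : C (1 / 2 : ℝ) * 2 = 1 := by rw [← map_ofNat C 2, ← map_mul]; norm_num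
    linear_combination C (1 / 2 : ℝ) * eulerGF_mul + (1 - eulerGF) * hC
  rw [h]
  refine majorizes_inv_one_add (fun m => ?_) (by simp)
  rw [coeff_C_mul, map_sub, coeff_exp, coeff_one]
  split_ifs with hm
  · simp [hm]
  · simp only [sub_zero, eq_ratCast]
    positivity

def loopSeries (r : ℝ⟦X⟧) (s : ℝ) : ℝ⟦X⟧ :=
  C (3 / 4) * (r ^ 2 * exp ℝ) * (1 + C (s / 12) * (r ^ 2 * exp ℝ))

theorem constantCoeff_loopSeries {r : ℝ⟦X⟧} (hr : constantCoeff r = 1) (s : ℝ) :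
    constantCoeff (loopSeries r s) = 3 / 4 * (1 + s / 12) := by
  simp [loopSeries, hr]

theorem rescale_natCast_add_exp (k ℓ : ℕ) (y : ℝ) :
    rescale ((k : ℝ) + ℓ + y) (exp ℝ) = exp ℝ ^ k * exp ℝ ^ ℓ * rescale y (exp ℝ) := by
  rw [exp_pow_eq_rescale_exp, exp_pow_eq_rescale_exp, exp_mul_exp_eq_exp_add,
    exp_mul_exp_eq_exp_add]

theorem sum_egfPoly_eq_coeff_loopSeries_pow (r : ℝ⟦X⟧) (s y : ℝ) (n k : ℕ) :
    (3 : ℝ) ^ k / 2 ^ (2 * k + 3) * ∑ ℓ ∈ range (k + 1),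
      (k.choose ℓ : ℝ) * s ^ ℓ * (1 / 12 ^ ℓ) * egfPoly r (2 * k + 2 * ℓ + 3) n (k + ℓ + y)
      = n ! * coeff n (C (1 / 8) * r ^ 3 * rescale y (exp ℝ) * loopSeries r s ^ k) := by
  have hexpand : C (1 / 8) * r ^ 3 * rescale y (exp ℝ) * loopSeries r s ^ k
      = ∑ ℓ ∈ range (k + 1), C ((3 : ℝ) ^ k / 2 ^ (2 * k + 3) * (k.choose ℓ * s ^ ℓ * (1 / 12 ^ ℓ)))
        * (r ^ (2 * k + 2 * ℓ + 3) * rescale (k + ℓ + y) (exp ℝ)) := by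
    rw [loopSeries, mul_pow, add_comm 1, add_pow, mul_sum, mul_sum]
    refine sum_congr rfl fun ℓ _ => ?_
    have hC : C ((3 : ℝ) ^ k / 2 ^ (2 * k + 3) * (k.choose ℓ * s ^ ℓ * (1 / 12 ^ ℓ)))
        = C (1 / 8) * C (3 / 4) ^ k * C (s / 12) ^ ℓ * (k.choose ℓ : ℝ⟦X⟧) := by
      rw [← map_pow, ← map_pow, ← map_natCast C, ← map_mul, ← map_mul, ← map_mul]
      congr 1
      rw [pow_add, pow_mul, div_pow, div_pow]
      ring
    rw [hC, rescale_natCast_add_exp]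
    ring
  rw [hexpand, map_sum, mul_sum, mul_sum]
  refine sum_congr rfl fun ℓ _ => ?_
  rw [coeff_C_mul, egfPoly]
  ring

-- `e^{xt}(e^{dt}-1)/(e^{Nt}-1)`, with `e^t - 1` cancelled so that the denominator is invertible.
def bernoulliDiffSeries (N d : ℕ) (x : ℝ) : ℝ⟦X⟧ :=
  rescale x (exp ℝ) * (∑ i ∈ range d, exp ℝ ^ i) * (∑ i ∈ range N, exp ℝ ^ i)⁻¹

theorem factorial_mul_coeff_bernoulliDiffSeries {N : ℕ} (hN : N ≠ 0) (d : ℕ) (x : ℝ) (n : ℕ) :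
    ((n + 1)! : ℝ) * coeff n (bernoulliDiffSeries N d x)
      = N ^ n * (bernoulliPoly (n + 1) ((x + d) / N) - bernoulliPoly (n + 1) (x / N)) := by
  set B : ℝ → ℝ⟦X⟧ := fun y =>
    rescale (N : ℝ) (mk fun m => Polynomial.aeval y ((1 / m ! : ℚ) • Polynomial.bernoulli m))
  have hN' : (N : ℝ) ≠ 0 := Nat.cast_ne_zero.2 hN
  have hgeom : constantCoeff (∑ i ∈ range N, exp ℝ ^ i) ≠ 0 := by simpa using hN
  have hdiff : B ((x + d) / N) - B (x / N) = C (N : ℝ) * X * bernoulliDiffSeries N d x := by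
    refine mul_right_cancel₀ (b := exp ℝ ^ N - 1) ?_ ?_
    · rw [← geom_sum_mul]
      exact mul_ne_zero (fun h => hgeom (by rw [h, map_zero])) (exp_sub_one_ne_zero ℝ)
    have hshift : rescale (x + d) (exp ℝ) = rescale x (exp ℝ) * exp ℝ ^ d := by
      rw [exp_pow_eq_rescale_exp, exp_mul_exp_eq_exp_add]
    rw [sub_mul, rescale_bernoulli_generating_function, rescale_bernoulli_generating_function,
      mul_div_cancel₀ _ hN', mul_div_cancel₀ _ hN', hshift, bernoulliDiffSeries, ← geom_sum_mul]
    linear_combination -(C (N : ℝ) * X * rescale x (exp ℝ) * (∑ i ∈ range d, exp ℝ ^ i)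
      * (exp ℝ - 1)) * PowerSeries.inv_mul_cancel _ hgeom
      - C (N : ℝ) * X * rescale x (exp ℝ) * geom_sum_mul (exp ℝ) d
  have hcoeff := congrArg (coeff (n + 1)) hdiff
  rw [map_sub, mul_comm (C _), mul_assoc, coeff_succ_X_mul, coeff_C_mul] at hcoeff
  simp only [B, coeff_rescale, coeff_mk, map_smul, Rat.smul_def] at hcoeff
  simp only [bernoulliPoly, Nat.factorial_succ] at hcoeff ⊢
  push_cast at hcoeff ⊢
  field_simp at hcoeff
  apply mul_left_cancel₀ hN'
  linear_combination -hcoeff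

-- Since `q(e^t+1) = 2`, `(1 - w)(e^t+1)^4 = (e^t+1)^4 - 3e^t(e^t+1)^2 + e^{2t}`,
-- which is `1 + e^t + ⋯ + e^{4t}`.
theorem bernoulliDiffSeries_mul_one_sub_loopSeries (x : ℝ) :
    bernoulliDiffSeries 5 2 x * (1 - loopSeries eulerGF (-1))
      = C (1 / 8) * eulerGF ^ 3 * rescale x (exp ℝ) := by
  have hne : (exp ℝ + 1) ^ 4 ≠ 0 := pow_ne_zero 4 fun h => by simpa using congrArg constantCoeff h
  refine mul_right_cancel₀ hne ?_
  have hq (p : ℕ) : eulerGF ^ p * (exp ℝ + 1) ^ p = 2 ^ p := by rw [← mul_pow, eulerGF_mul]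
  have h8 : C (1 / 8 : ℝ) * 8 = 1 := by rw [← map_ofNat C 8, ← map_mul]; norm_num
  have h3 : C (3 / 4 : ℝ) * 4 = 3 := by rw [← map_ofNat C 4, ← map_ofNat C 3, ← map_mul]; norm_num
  have h1 : C (3 / 4 : ℝ) * C (-1 / 12) * 16 = -1 := by
    rw [← map_ofNat C 16, ← map_mul, ← map_mul]; norm_num
  have hg : bernoulliDiffSeries 5 2 x * (∑ i ∈ range 5, exp ℝ ^ i)
      = rescale x (exp ℝ) * (∑ i ∈ range 2, exp ℝ ^ i) := by
    rw [bernoulliDiffSeries, mul_assoc, PowerSeries.inv_mul_cancel _ (by simp), mul_one]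
  simp only [sum_range_succ, sum_range_zero] at hg
  rw [loopSeries]
  linear_combination hg - (C (1 / 8) * rescale x (exp ℝ) * (exp ℝ + 1)) * hq 3
    - rescale x (exp ℝ) * (exp ℝ + 1) * h8
    - (bernoulliDiffSeries 5 2 x * C (3 / 4) * exp ℝ * (exp ℝ + 1) ^ 2) * hq 2
    - (bernoulliDiffSeries 5 2 x * exp ℝ * (exp ℝ + 1) ^ 2) * h3
    - (bernoulliDiffSeries 5 2 x * C (3 / 4) * C (-1 / 12) * exp ℝ ^ 2) * hq 4
    - bernoulliDiffSeries 5 2 x * exp ℝ ^ 2 * h1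

theorem summable_sum_abs_loop_terms (n : ℕ) (x : ℝ) :
    Summable fun k : ℕ => ∑ ℓ ∈ range (k + 1),
      |(3 : ℝ) ^ k / 2 ^ (2 * k + 3) * (k.choose ℓ : ℝ) * (-1 : ℝ) ^ ℓ * (1 / 12 ^ ℓ) *
        eulerHO (2 * k + 2 * ℓ + 3) n (k + ℓ + x)| := by
  set F := C (1 / 8) * eulerMajorant ^ 3 * rescale |x| (exp ℝ)
  set W := loopSeries eulerMajorant 1
  have hbound (k : ℕ) : ∑ ℓ ∈ range (k + 1),
      |(3 : ℝ) ^ k / 2 ^ (2 * k + 3) * (k.choose ℓ : ℝ) * (-1 : ℝ) ^ ℓ * (1 / 12 ^ ℓ) *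
        eulerHO (2 * k + 2 * ℓ + 3) n (k + ℓ + x)| ≤ n ! * coeff n (F * W ^ k) := by
    rw [← sum_egfPoly_eq_coeff_loopSeries_pow, mul_sum]
    refine sum_le_sum fun ℓ _ => ?_
    have hxb : |(k : ℝ) + ℓ + x| ≤ k + ℓ + |x| :=
      (abs_add_le _ _).trans (by rw [abs_of_nonneg (by positivity)])
    simp only [abs_mul, abs_pow, abs_neg, abs_one, one_pow, mul_one, Nat.abs_cast,
      abs_of_nonneg (by positivity : (0 : ℝ) ≤ 3 ^ k / 2 ^ (2 * k + 3)),
      abs_of_nonneg (by positivity : (0 : ℝ) ≤ 1 / 12 ^ ℓ), eulerHO_eq_egfPoly, ← mul_assoc]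
    gcongr
    exact abs_egfPoly_le majorizes_eulerGF _ _ hxb
  have hW : ‖constantCoeff W‖ < 1 := by
    rw [constantCoeff_loopSeries constantCoeff_eulerMajorant]; norm_num
  refine Summable.of_nonneg_of_le (fun k => sum_nonneg fun _ _ => abs_nonneg _)
    (fun k => (hbound k).trans (mul_le_mul_of_nonneg_left (le_abs_self _) (by positivity)))
    ((summable_norm_coeff_mul_pow F W n hW).mul_left (n ! : ℝ))

end BesselThreeLoop

end

open BesselThreeLoop

theorem bessel_three_loop (n : ℕ) (x : ℝ) :
    Summable (fun k : ℕ => ∑ ℓ ∈ Finset.range (k + 1),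
        |(3 : ℝ) ^ k / 2 ^ (2 * k + 3) * (k.choose ℓ : ℝ) * (-1 : ℝ) ^ ℓ * (1 / 12 ^ ℓ) *
          eulerHO (2 * k + 2 * ℓ + 3) n (k + ℓ + x)|) ∧
    bernoulliPoly (n + 1) ((x + 2) / 5) - bernoulliPoly (n + 1) (x / 5)
      = ((n + 1 : ℝ) / 5 ^ n) * ∑' k : ℕ, (3 : ℝ) ^ k / 2 ^ (2 * k + 3) *
          ∑ ℓ ∈ Finset.range (k + 1),
            (k.choose ℓ : ℝ) * (-1 : ℝ) ^ ℓ * (1 / 12 ^ ℓ) *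
              eulerHO (2 * k + 2 * ℓ + 3) n (k + ℓ + x) := by
  refine ⟨summable_sum_abs_loop_terms n x, ?_⟩
  have hw : ‖constantCoeff (loopSeries eulerGF (-1))‖ < 1 := by
    rw [constantCoeff_loopSeries constantCoeff_eulerGF]; norm_num
  have hsum :=
    (hasSum_coeff_mul_pow (bernoulliDiffSeries_mul_one_sub_loopSeries x) hw n).mul_left (n ! : ℝ)
  simp only [eulerHO_eq_egfPoly, sum_egfPoly_eq_coeff_loopSeries_pow]
  rw [hsum.tsum_eq]
  have hB := factorial_mul_coeff_bernoulliDiffSeries (N := 5) (by norm_num) 2 x n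
  rw [Nat.factorial_succ] at hB
  push_cast at hB
  field_simp
  linear_combination -hB
end
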